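/- arXiv:2502.20303 — 5 statements merged into one kernel-verified Lean document; each statement's English description precedes it below -/
import Mathlib

section
/- Let κ > 0 and let ω : ℝ → ℝ satisfy ω'' = (1/4)e^{-2ω} - κ e^{2ω} with ω(0) = 0, ω'(0) = 0, and assume 4κ < 1. Then ω(u) ≥ 0 for all u, i.e. ω attains its global minimum at u = 0. -/
/-!
With `V(w) = κ (e^{2w} - 1) + (e^{-2w} - 1) / 4`, the equation reads `ω'' = -V'(ω) / 2`, so the
energy `ω'^2 + V(ω)` is conserved and equals its value `0` at `u = 0`. Hence `V(ω u) ≤ 0` everywhere.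
For `w < 0` and `x = e^{2w} ∈ (0, 1)` one has `V(w) = (1 - x)(1 - 4κx) / (4x) > 0` as soon as
`4κ < 1`, so `ω` never becomes negative.
-/

open Real

theorem energy_eq_of_hasDerivAt {V V' ω ω' : ℝ → ℝ} (hV : ∀ w, HasDerivAt V (V' w) w)
    (hω : ∀ u, HasDerivAt ω (ω' u) u) (hω' : ∀ u, HasDerivAt ω' (-V' (ω u) / 2) u) (u : ℝ) :
    ω' u ^ 2 + V (ω u) = ω' 0 ^ 2 + V (ω 0) := by
  have hE : ∀ t, HasDerivAt (fun t => ω' t ^ 2 + V (ω t)) 0 t := fun t =>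
    (((hω' t).pow 2).add ((hV (ω t)).comp t (hω t))).congr_deriv (by push_cast; ring)
  exact is_const_of_deriv_eq_zero (fun t => (hE t).differentiableAt) (fun t => (hE t).deriv) u 0

noncomputable def potential (κ w : ℝ) : ℝ :=
  κ * (exp (2 * w) - 1) + 1 / 4 * (exp (-2 * w) - 1)

theorem hasDerivAt_potential (κ w : ℝ) :
    HasDerivAt (potential κ) (2 * κ * exp (2 * w) - 1 / 2 * exp (-2 * w)) w := by
  have h₁ := (((hasDerivAt_id w).const_mul 2).exp.sub_const 1).const_mul κ
  have h₂ := (((hasDerivAt_id w).const_mul (-2)).exp.sub_const 1).const_mul (1 / 4 : ℝ)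
  exact (h₁.add h₂).congr_deriv (by simp only [id]; ring)

theorem potential_zero (κ : ℝ) : potential κ 0 = 0 := by
  simp [potential]

theorem potential_pos_of_neg {κ w : ℝ} (hκ : 4 * κ < 1) (hw : w < 0) : 0 < potential κ w := by
  set x := exp (2 * w)
  have hx₀ : 0 < x := exp_pos _
  have hx₁ : x < 1 := exp_lt_one_iff.mpr (by linarith)
  have hinv : exp (-2 * w) = x⁻¹ := by rw [← exp_neg]; ring_nf
  have hfactor : potential κ w = (1 - x) * (1 - 4 * κ * x) / (4 * x) := by
    rw [potential, hinv]
    field_simp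
    ring
  rw [hfactor]
  apply div_pos _ (by positivity)
  apply mul_pos (by linarith)
  rcases le_or_gt κ 0 with hκ₀ | hκ₀ <;> nlinarith

theorem stmt_3_general (κ : ℝ) (hκ' : 4 * κ < 1) (ω ω' : ℝ → ℝ)
    (hω : ∀ u, HasDerivAt ω (ω' u) u)
    (hω' : ∀ u, HasDerivAt ω' (1/4 * Real.exp (-2 * ω u) - κ * Real.exp (2 * ω u)) u)
    (h0 : ω 0 = 0) (h0' : ω' 0 = 0) :
    ∀ u, 0 ≤ ω u := by
  have hω'' : ∀ u, HasDerivAt ω'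
      (-(2 * κ * exp (2 * ω u) - 1 / 2 * exp (-2 * ω u)) / 2) u := fun u =>
    (hω' u).congr_deriv (by ring)
  intro u
  by_contra! hneg
  have henergy := energy_eq_of_hasDerivAt (hasDerivAt_potential κ) hω hω'' u
  rw [h0, h0', potential_zero] at henergy
  nlinarith [potential_pos_of_neg hκ' hneg, sq_nonneg (ω' u)]

theorem stmt_3 (κ : ℝ) (hκ : 0 < κ) (hκ' : 4 * κ < 1) (ω ω' : ℝ → ℝ)
    (hω : ∀ u, HasDerivAt ω (ω' u) u)
    (hω' : ∀ u, HasDerivAt ω' (1/4 * Real.exp (-2 * ω u) - κ * Real.exp (2 * ω u)) u)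
    (h0 : ω 0 = 0) (h0' : ω' 0 = 0) :
    ∀ u, 0 ≤ ω u :=
  stmt_3_general κ hκ' ω ω' hω hω' h0 h0'
end

section
/- Let κ ≥ 0, â ∈ ℝ, and let α, β : ℝ → ℝ satisfy α'' = âα - 2α²β - 2κβ and β'' = âβ - 2αβ² - α/2. Then the quantity C₂(u) = (α(u)β'(u) - α'(u)β(u))² + 4(√κ·β'(u) - α'(u)/2)² + 4(α(u)β(u) - â - √κ)(α(u)/2 - √κ·β(u))² is constant in u. -/
/-- `C₂` at the phase-space point `(α, α', β, β') = (a, a', b, b')`, with `s` standing for `√κ`. -/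
noncomputable def conservedC2 (s ahat a a' b b' : ℝ) : ℝ :=
  (a * b' - a' * b) ^ 2 + 4 * (s * b' - a' / 2) ^ 2 +
    4 * (a * b - ahat - s) * (a / 2 - s * b) ^ 2

section

variable {κ ahat s : ℝ} {α α' β β' : ℝ → ℝ}

theorem hasDerivAt_conservedC2 (hs : s ^ 2 = κ)
    (hα : ∀ u, HasDerivAt α (α' u) u)
    (hα' : ∀ u, HasDerivAt α' (ahat * α u - 2 * (α u)^2 * β u - 2 * κ * β u) u)
    (hβ : ∀ u, HasDerivAt β (β' u) u)
    (hβ' : ∀ u, HasDerivAt β' (ahat * β u - 2 * α u * (β u)^2 - α u / 2) u) (u : ℝ) :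
    HasDerivAt (fun w => conservedC2 s ahat (α w) (α' w) (β w) (β' w)) 0 u := by
  have hWronskian := ((hα u).fun_mul (hβ' u)).fun_sub ((hα' u).fun_mul (hβ u))
  have hMomentum := ((hβ' u).const_mul s).fun_sub ((hα' u).div_const 2)
  have hPotential := (((hα u).fun_mul (hβ u)).sub_const ahat).sub_const s
  have hPosition := ((hα u).div_const 2).fun_sub ((hβ u).const_mul s)
  exact (((hWronskian.fun_pow 2).fun_add ((hMomentum.fun_pow 2).const_mul 4)).fun_add
    ((hPotential.const_mul 4).fun_mul (hPosition.fun_pow 2))).congr_deriv (by rw [← hs]; ring)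

end

theorem stmt_5 (κ ahat : ℝ) (hκ : 0 ≤ κ) (α α' β β' : ℝ → ℝ)
    (hα : ∀ u, HasDerivAt α (α' u) u)
    (hα' : ∀ u, HasDerivAt α' (ahat * α u - 2 * (α u)^2 * β u - 2 * κ * β u) u)
    (hβ : ∀ u, HasDerivAt β (β' u) u)
    (hβ' : ∀ u, HasDerivAt β' (ahat * β u - 2 * α u * (β u)^2 - α u / 2) u) :
    ∀ u v : ℝ,
      (α u * β' u - α' u * β u)^2 + 4 * (Real.sqrt κ * β' u - α' u / 2)^2 +
        4 * (α u * β u - ahat - Real.sqrt κ) * (α u / 2 - Real.sqrt κ * β u)^2 =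
      (α v * β' v - α' v * β v)^2 + 4 * (Real.sqrt κ * β' v - α' v / 2)^2 +
        4 * (α v * β v - ahat - Real.sqrt κ) * (α v / 2 - Real.sqrt κ * β v)^2 := by
  have hC2 := hasDerivAt_conservedC2 (Real.sq_sqrt hκ) hα hα' hβ hβ'
  exact is_const_of_deriv_eq_zero (fun u => (hC2 u).differentiableAt) (fun u => (hC2 u).deriv)
end

section
/- The function R(u) = 2·coth(u/2)·cosh(u/2) on (0, ∞) tends to +∞ as u → 0⁺ and as u → ∞, is strictly decreasing on (0, 2·arcsinh(1)] and strictly increasing on [2·arcsinh(1), ∞); in particular it attains its global minimum at u* = 2·arcsinh(1) with R(u*) = 4. -/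
open Real Filter Set

theorem stmt_9 (R : ℝ → ℝ)
    (hR : ∀ u, R u = 2 * Real.cosh (u/2) ^ 2 / Real.sinh (u/2)) :
    Filter.Tendsto R (nhdsWithin 0 (Set.Ioi 0)) Filter.atTop ∧
    Filter.Tendsto R Filter.atTop Filter.atTop ∧
    StrictAntiOn R (Set.Ioc (0:ℝ) (2 * Real.arsinh 1)) ∧
    StrictMonoOn R (Set.Ici (2 * Real.arsinh 1)) ∧
    R (2 * Real.arsinh 1) = 4 ∧
    (∀ u ∈ Set.Ioi (0:ℝ), R (2 * Real.arsinh 1) ≤ R u) := by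
  have hs : ∀ u : ℝ, 0 < u → 0 < Real.sinh (u/2) := fun u hu =>
    Real.sinh_pos_iff.mpr (by linarith)
  have key : ∀ u : ℝ, 0 < u → R u = 2 * Real.sinh (u/2) + 2 * (Real.sinh (u/2))⁻¹ := by
    intro u hu
    have h := hs u hu
    rw [hR u, Real.cosh_sq]
    field_simp
  have hstarpos : 0 < 2 * Real.arsinh 1 := by
    have : 0 < Real.arsinh 1 := Real.arsinh_pos_iff.mpr one_pos
    linarith
  have hstar : Real.sinh ((2 * Real.arsinh 1) / 2) = 1 := by
    rw [show (2 * Real.arsinh 1) / 2 = Real.arsinh 1 by ring, Real.sinh_arsinh]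
  -- comparison lemmas for f t = 2t + 2/t
  have flt : ∀ a b : ℝ, 0 < a → a < b → a * b < 1 →
      2 * b + 2 * b⁻¹ < 2 * a + 2 * a⁻¹ := by
    intro a b ha hab h1
    have hb : 0 < b := lt_trans ha hab
    have ha' : a * a⁻¹ = 1 := mul_inv_cancel₀ ha.ne'
    have hb' : b * b⁻¹ = 1 := mul_inv_cancel₀ hb.ne'
    have hai : 0 < a⁻¹ := inv_pos.mpr ha
    have hbi : 0 < b⁻¹ := inv_pos.mpr hb
    nlinarith [mul_pos hai hbi, mul_pos ha hb]
  have fgt : ∀ a b : ℝ, 0 < a → a < b → 1 < a * b →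
      2 * a + 2 * a⁻¹ < 2 * b + 2 * b⁻¹ := by
    intro a b ha hab h1
    have hb : 0 < b := lt_trans ha hab
    have ha' : a * a⁻¹ = 1 := mul_inv_cancel₀ ha.ne'
    have hb' : b * b⁻¹ = 1 := mul_inv_cancel₀ hb.ne'
    have hai : 0 < a⁻¹ := inv_pos.mpr ha
    have hbi : 0 < b⁻¹ := inv_pos.mpr hb
    nlinarith [mul_pos hai hbi, mul_pos ha hb]
  refine ⟨?_, ?_, ?_, ?_, ?_, ?_⟩
  · -- tendsto at 0⁺
    have h1 : Tendsto (fun u : ℝ => Real.sinh (u/2)) (nhdsWithin 0 (Set.Ioi 0))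
        (nhdsWithin 0 (Set.Ioi 0)) := by
      apply tendsto_nhdsWithin_of_tendsto_nhds_of_eventually_within
      · have hc : Continuous fun u : ℝ => Real.sinh (u/2) :=
          Real.continuous_sinh.comp (continuous_id.div_const 2)
        have := hc.tendsto 0
        simpa using this.mono_left nhdsWithin_le_nhds
      · filter_upwards [self_mem_nhdsWithin] with u hu
        exact hs u hu
    have h2 : Tendsto (fun t : ℝ => 2 * t⁻¹) (nhdsWithin 0 (Set.Ioi 0)) atTop :=
      tendsto_inv_nhdsGT_zero.const_mul_atTop two_pos
    have h3 : Tendsto (fun u : ℝ => 2 * (Real.sinh (u/2))⁻¹) (nhdsWithin 0 (Set.Ioi 0)) atTop :=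
      h2.comp h1
    have h4 : Tendsto (fun u : ℝ => 2 * Real.sinh (u/2)) (nhdsWithin 0 (Set.Ioi 0)) (nhds 0) := by
      have hc : Continuous fun u : ℝ => 2 * Real.sinh (u/2) := by continuity
      have := hc.tendsto 0
      simpa using this.mono_left nhdsWithin_le_nhds
    have h5 := h4.add_atTop h3
    apply h5.congr'
    filter_upwards [self_mem_nhdsWithin] with u hu
    exact (key u hu).symm
  · -- tendsto at ∞
    have h1 : Tendsto (fun u : ℝ => 2 * Real.sinh (u/2)) atTop atTop := by
      have : Tendsto (fun u : ℝ => u / 2) atTop atTop :=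
        tendsto_id.atTop_div_const two_pos
      have hst : Tendsto Real.sinh atTop atTop := by
        have hb : Tendsto (fun x : ℝ => (Real.exp x - 1) / 2) atTop atTop :=
          (Filter.tendsto_atTop_add_const_right _ (-1) Real.tendsto_exp_atTop).atTop_div_const two_pos
        apply tendsto_atTop_mono' _ _ hb
        filter_upwards [eventually_ge_atTop (0:ℝ)] with x hx
        have : Real.exp (-x) ≤ 1 := Real.exp_le_one_iff.mpr (by linarith)
        rw [Real.sinh_eq]
        linarith
      exact (hst.comp this).const_mul_atTop two_pos
    apply tendsto_atTop_mono' _ _ h1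
    filter_upwards [eventually_gt_atTop (0:ℝ)] with u hu
    have h := hs u hu
    rw [key u hu]
    have : 0 ≤ 2 * (Real.sinh (u/2))⁻¹ := by positivity
    linarith
  · -- strict anti on Ioc
    intro a ha b hb hab
    have ha0 := ha.1
    have hb0 : (0:ℝ) < b := lt_trans ha.1 hab
    have hsab : Real.sinh (a/2) < Real.sinh (b/2) :=
      Real.sinh_lt_sinh.mpr (by linarith)
    have hsb1 : Real.sinh (b/2) ≤ 1 := by
      calc Real.sinh (b/2) ≤ Real.sinh ((2 * Real.arsinh 1)/2) :=
            Real.sinh_le_sinh.mpr (by linarith [hb.2])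
        _ = 1 := hstar
    have hsa := hs a ha0
    have hprod : Real.sinh (a/2) * Real.sinh (b/2) < 1 := by nlinarith
    rw [key a ha0, key b hb0]
    exact flt _ _ hsa hsab hprod
  · -- strict mono on Ici
    intro a ha b hb hab
    have ha0 : (0:ℝ) < a := lt_of_lt_of_le hstarpos ha
    have hb0 : (0:ℝ) < b := lt_trans ha0 hab
    have hsab : Real.sinh (a/2) < Real.sinh (b/2) :=
      Real.sinh_lt_sinh.mpr (by linarith)
    have hsa1 : 1 ≤ Real.sinh (a/2) := by
      calc (1:ℝ) = Real.sinh ((2 * Real.arsinh 1)/2) := hstar.symm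
        _ ≤ Real.sinh (a/2) := Real.sinh_le_sinh.mpr (by simp at ha ⊢; linarith)
    have hprod : 1 < Real.sinh (a/2) * Real.sinh (b/2) := by nlinarith
    rw [key a ha0, key b hb0]
    exact fgt _ _ (hs a ha0) hsab hprod
  · rw [key _ hstarpos, hstar]; norm_num
  · intro u hu
    simp only [Set.mem_Ioi] at hu
    rw [key _ hstarpos, hstar, key u hu]
    have h := hs u hu
    have h' : (Real.sinh (u/2)) * (Real.sinh (u/2))⁻¹ = 1 := mul_inv_cancel₀ h.ne'
    have hi : 0 < (Real.sinh (u/2))⁻¹ := inv_pos.mpr h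
    norm_num
    nlinarith [sq_nonneg (Real.sinh (u/2) - 1)]
end

section
/- Let Θ₀ ∈ (-1/√2, -1/√3) and κ ∈ (-1/4, 1/4). Define b = (1/(2Θ₀²))·((1+4κ)(1-Θ₀²) + √((1+4κ)²(1-Θ₀²)² - 16Θ₀⁴κ)). Then b > 0, b + 4κ/b > 0, and -√(4κ+1)/√(4κ + b + 4κ/b + 1) = Θ₀. -/
/-!
With `t = Θ²` and `c = 1 + 4κ`, the number `b` is the larger root of `t b² - c (1 - t) b + 4κ t = 0`,
i.e. `b + 4κ/b = c (1 - t) / t`. Hence `4κ + (b + 4κ/b) + 1 = c / Θ²`, and the period relation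
reduces to `-√c / (√c / |Θ|) = Θ` for `Θ < 0`. The discriminant is nonnegative because it equals
`c² (1 - 2t) + t² (1 - 4κ)²` and `t < 1/2`.
-/

open Real

lemma discriminant_nonneg_of_le_half {t κ : ℝ} (ht : t ≤ 1 / 2) :
    0 ≤ (1 + 4 * κ) ^ 2 * (1 - t) ^ 2 - 16 * t ^ 2 * κ := by
  have h : (1 + 4 * κ) ^ 2 * (1 - t) ^ 2 - 16 * t ^ 2 * κ
      = (1 + 4 * κ) ^ 2 * (1 - 2 * t) + t ^ 2 * (1 - 4 * κ) ^ 2 := by ring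
  have ht' : 0 ≤ 1 - 2 * t := by linarith
  rw [h]
  positivity

lemma sq_lt_half_of_neg_inv_sqrt_two_lt {Θ : ℝ} (hlo : -(1 / √2) < Θ) (hΘ : Θ < 0) :
    Θ ^ 2 < 1 / 2 := by
  have h := pow_lt_pow_left₀ (neg_lt.mp hlo) (neg_nonneg.mpr hΘ.le) two_ne_zero
  rwa [neg_sq, div_pow, sq_sqrt zero_le_two, one_pow] at h

lemma pos_and_add_div_eq_of_larger_root {t A κ s b : ℝ} (ht : 0 < t) (hA : 0 < A)
    (hs0 : 0 ≤ s) (hs : s ^ 2 = A ^ 2 - 16 * t ^ 2 * κ) (hb : 2 * t * b = A + s) :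
    0 < b ∧ b + 4 * κ / b = A / t := by
  have hbpos : 0 < b := pos_of_mul_pos_right (hb ▸ by positivity : 0 < 2 * t * b) (by positivity)
  have hroot : t * b ^ 2 - A * b + 4 * κ * t = 0 := by
    have h : 4 * t * (t * b ^ 2 - A * b + 4 * κ * t) = 0 := by
      linear_combination (2 * t * b - A + s) * hb + hs
    exact (mul_eq_zero.mp h).resolve_left (by positivity)
  refine ⟨hbpos, ?_⟩
  field_simp
  linear_combination hroot

lemma neg_sqrt_div_sqrt_div_sq {Θ c : ℝ} (hΘ : Θ < 0) (hc : 0 < c) :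
    -√c / √(c / Θ ^ 2) = Θ := by
  have hsc : 0 < √c := sqrt_pos.mpr hc
  rw [sqrt_div hc.le, sqrt_sq_eq_abs, abs_of_neg hΘ]
  field_simp

theorem stmt_14 (Θ κ b : ℝ)
    (hΘ : Θ ∈ Set.Ioo (-(1 / Real.sqrt 2)) (-(1 / Real.sqrt 3)))
    (hκ : κ ∈ Set.Ioo (-(1/4) : ℝ) (1/4))
    (hb : b = (1 / (2 * Θ^2)) * ((1 + 4*κ) * (1 - Θ^2) +
        Real.sqrt ((1 + 4*κ)^2 * (1 - Θ^2)^2 - 16 * Θ^4 * κ))) :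
    0 < b ∧ 0 < b + 4*κ/b ∧
      -Real.sqrt (4*κ + 1) / Real.sqrt (4*κ + (b + 4*κ/b) + 1) = Θ := by
  obtain ⟨hΘlo, hΘhi⟩ := hΘ
  have hΘneg : Θ < 0 := hΘhi.trans (neg_neg_of_pos (by positivity))
  have hΘ0 : Θ ≠ 0 := hΘneg.ne
  have hΘsq : Θ ^ 2 < 1 / 2 := sq_lt_half_of_neg_inv_sqrt_two_lt hΘlo hΘneg
  have hc : 0 < 1 + 4 * κ := by linarith [hκ.1]
  have hA : 0 < (1 + 4 * κ) * (1 - Θ ^ 2) := mul_pos hc (by linarith)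
  have hD : 0 ≤ (1 + 4*κ)^2 * (1 - Θ^2)^2 - 16 * Θ^4 * κ := by
    have h := discriminant_nonneg_of_le_half (κ := κ) hΘsq.le
    ring_nf at h ⊢
    exact h
  obtain ⟨hbpos, hB⟩ := pos_and_add_div_eq_of_larger_root (t := Θ ^ 2) (b := b)
    (by positivity) hA (sqrt_nonneg _) (by rw [sq_sqrt hD]; ring) (by rw [hb]; field_simp)
  refine ⟨hbpos, hB ▸ by positivity, ?_⟩
  rw [hB, show 4 * κ + (1 + 4 * κ) * (1 - Θ ^ 2) / Θ ^ 2 + 1 = (4 * κ + 1) / Θ ^ 2 by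
    field_simp; ring]
  exact neg_sqrt_div_sqrt_div_sq hΘneg (by linarith)
end

section
/- Let κ < 0 and let x, x₃, x₄ : ℝ → ℝ be C¹ functions satisfying x(𝔰)² + x₃(𝔰)² + x₄(𝔰)²/κ = 1/κ for all 𝔰, with x, x', x₄ all positive at some point 𝔰̃ and x₃(𝔰̃)·x'(𝔰̃) = x(𝔰̃)·x₃'(𝔰̃) with x₃'(𝔰̃) > 0. Then x'(𝔰̃)·x₄(𝔰̃) > x(𝔰̃)·x₄'(𝔰̃). -/
/-!
Write `(a, b, c) = (x, x₃, x₄)`. Clearing `κ`, the profile curve satisfies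
`κ (a² + b²) + c² = 1` and hence `κ (a a' + b b') + c c' = 0`. Eliminating `c²` and `c c'`,
`c (a' c - a c') = a' - κ b (b a' - a b')`, and the tangency condition `b a' = a b'` kills the
last term, so `c (a' c - a c') = a' > 0`.
-/

theorem HasDerivAt.hyperboloid_tangent {κ r s x' x₃' x₄' : ℝ} {x x₃ x₄ : ℝ → ℝ} (hκ : κ ≠ 0)
    (hx : HasDerivAt x x' s) (hx₃ : HasDerivAt x₃ x₃' s) (hx₄ : HasDerivAt x₄ x₄' s)
    (hsurf : ∀ᶠ t in nhds s, x t ^ 2 + x₃ t ^ 2 + x₄ t ^ 2 / κ = r) :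
    κ * (x s * x' + x₃ s * x₃') + x₄ s * x₄' = 0 := by
  have hderiv : HasDerivAt (fun t => x t ^ 2 + x₃ t ^ 2 + x₄ t ^ 2 / κ)
      (↑2 * x s ^ 1 * x' + ↑2 * x₃ s ^ 1 * x₃' + ↑2 * x₄ s ^ 1 * x₄' / κ) s :=
    ((hx.pow 2).add (hx₃.pow 2)).add ((hx₄.pow 2).div_const κ)
  have hzero := (hasDerivAt_const s r).congr_of_eventuallyEq hsurf
  have h := hderiv.unique hzero
  field_simp at h
  linear_combination h / 2

theorem hyperboloid_cross_eq {κ a b c a' b' c' : ℝ} (hκ : κ ≠ 0)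
    (hsurf : a ^ 2 + b ^ 2 + c ^ 2 / κ = 1 / κ) (htan : κ * (a * a' + b * b') + c * c' = 0)
    (hF : b * a' = a * b') :
    c * (a' * c - a * c') = a' := by
  have hc : c ^ 2 = 1 - κ * (a ^ 2 + b ^ 2) := by
    field_simp at hsurf
    linear_combination hsurf
  linear_combination a' * hc - a * htan - κ * b * hF

theorem stmt_19_general (κ : ℝ) (hκ : κ < 0) (x x₃ x₄ x' x₃' x₄' : ℝ → ℝ)
    (hx : ∀ s, HasDerivAt x (x' s) s)
    (hx₃ : ∀ s, HasDerivAt x₃ (x₃' s) s)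
    (hx₄ : ∀ s, HasDerivAt x₄ (x₄' s) s)
    (hsurf : ∀ s, x s ^ 2 + x₃ s ^ 2 + x₄ s ^ 2 / κ = 1 / κ)
    (st : ℝ) (hx'p : 0 < x' st) (hx₄p : 0 < x₄ st)
    (hF : x₃ st * x' st = x st * x₃' st) :
    x st * x₄' st < x' st * x₄ st := by
  have htan := (hx st).hyperboloid_tangent hκ.ne (hx₃ st) (hx₄ st) (.of_forall hsurf)
  have hcross := hyperboloid_cross_eq hκ.ne (hsurf st) htan hF
  rw [← sub_pos]
  exact pos_of_mul_pos_right (hcross.symm ▸ hx'p) hx₄p.le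

theorem stmt_19 (κ : ℝ) (hκ : κ < 0) (x x₃ x₄ x' x₃' x₄' : ℝ → ℝ)
    (hx : ∀ s, HasDerivAt x (x' s) s)
    (hx₃ : ∀ s, HasDerivAt x₃ (x₃' s) s)
    (hx₄ : ∀ s, HasDerivAt x₄ (x₄' s) s)
    (hsurf : ∀ s, x s ^ 2 + x₃ s ^ 2 + x₄ s ^ 2 / κ = 1 / κ)
    (st : ℝ) (hxp : 0 < x st) (hx'p : 0 < x' st) (hx₄p : 0 < x₄ st)
    (hF : x₃ st * x' st = x st * x₃' st) (hx₃'p : 0 < x₃' st) :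
    x st * x₄' st < x' st * x₄ st :=
  stmt_19_general κ hκ x x₃ x₄ x' x₃' x₄' hx hx₃ hx₄ hsurf st hx'p hx₄p hF
end
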